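/- Let (π, T) be a contractive covariant representation of (A, α) on H, let ρ : A → B(K), W : H → K be as in the extension lemma (W is an isometry with W*ρ(α(a))W = π(a) and WW* commuting with ρ(α(A))). Set Δ* := (I - TT*)^{1/2}, let D* be the closed subspace generated by ρ(A)WΔ*H in K, set D := Δ*W* restricted to D*, and π̂(a) := ρ(a)|D* for a ∈ A. Then the operator matrix V₀ := [[T, D],[0, 0]] on H ⊕ D* satisfies the covariance relation V₀ (π ⊕ π̂)(α(a)) = (π ⊕ π̂)(a) V₀ for all a ∈ A. -/

import Mathlib

/-!
Since `W` is an isometry and `b ↦ W* ρ(α b) W = π b` is multiplicative, the operator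
`S = ρ(α b) W - W π(b)` satisfies `S* S = 0`, so `ρ(α b) W = W π(b)` and, taking adjoints,
`W* ρ(α a) = π(a) W*`. Covariance makes `π(a)` commute with `T T*`, hence with
`Δ* = (1 - T T*)^{1/2}`, so `Δ* W* ρ(α a) = π(a) Δ* W*` on all of `K`. Multiplying the block
matrices, the identity reduces to this relation and to `T π(α a) = π(a) T`.
-/

set_option synthInstance.maxHeartbeats 1000000
set_option maxHeartbeats 1000000

open ContinuousLinearMap

variable {H₁ H₂ : Type*}
  [NormedAddCommGroup H₁] [InnerProductSpace ℂ H₁]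
  [NormedAddCommGroup H₂] [InnerProductSpace ℂ H₂]

/-- The operator on the Hilbert space direct sum `H₁ ⊕ H₂` given by the `2 × 2`
operator matrix `[[P, Q], [R, S]]`. -/
noncomputable def blockOp (P : H₁ →L[ℂ] H₁) (Q : H₂ →L[ℂ] H₁)
    (R : H₁ →L[ℂ] H₂) (S : H₂ →L[ℂ] H₂) :
    WithLp 2 (H₁ × H₂) →L[ℂ] WithLp 2 (H₁ × H₂) :=
  ((WithLp.prodContinuousLinearEquiv 2 ℂ H₁ H₂).symm.toContinuousLinearMap.comp
      (((P.comp (fst ℂ H₁ H₂) + Q.comp (snd ℂ H₁ H₂))).prod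
        (R.comp (fst ℂ H₁ H₂) + S.comp (snd ℂ H₁ H₂)))).comp
    (WithLp.prodContinuousLinearEquiv 2 ℂ H₁ H₂).toContinuousLinearMap

lemma blockOp_comp (P : H₁ →L[ℂ] H₁) (Q : H₂ →L[ℂ] H₁)
    (R : H₁ →L[ℂ] H₂) (S : H₂ →L[ℂ] H₂)
    (P' : H₁ →L[ℂ] H₁) (Q' : H₂ →L[ℂ] H₁)
    (R' : H₁ →L[ℂ] H₂) (S' : H₂ →L[ℂ] H₂) :
    blockOp P Q R S ∘L blockOp P' Q' R' S' =
      blockOp (P ∘L P' + Q ∘L R') (P ∘L Q' + Q ∘L S')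
        (R ∘L P' + S ∘L R') (R ∘L Q' + S ∘L S') := by
  ext x
  simp [blockOp, add_add_add_comm]

section Compression

variable {B H K : Type*} [Ring B] [StarRing B] [Algebra ℂ B]
  [NormedAddCommGroup H] [InnerProductSpace ℂ H] [CompleteSpace H]
  [NormedAddCommGroup K] [InnerProductSpace ℂ K] [CompleteSpace K]
  {ρ : B →⋆ₐ[ℂ] (K →L[ℂ] K)} {σ : B →⋆ₐ[ℂ] (H →L[ℂ] H)} {W : H →L[ℂ] K}

lemma adjoint_starAlgHom {E : Type*} [NormedAddCommGroup E] [InnerProductSpace ℂ E]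
    [CompleteSpace E] (φ : B →⋆ₐ[ℂ] (E →L[ℂ] E)) (b : B) : adjoint (φ b) = φ (star b) := by
  rw [← star_eq_adjoint, map_star]

lemma comp_eq_comp_of_compression_eq (hW : adjoint W ∘L W = 1)
    (h : ∀ b, adjoint W ∘L ρ b ∘L W = σ b) (b : B) : ρ b ∘L W = W ∘L σ b := by
  rw [← sub_eq_zero, ← adjoint_comp_self_eq_zero_iff]
  have h₁ : adjoint W ∘L ρ (star b) ∘L ρ b ∘L W = σ (star b) ∘L σ b := by
    simpa only [map_mul, mul_def, comp_assoc] using h (star b * b)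
  have h₂ : adjoint W ∘L ρ (star b) ∘L W ∘L σ b = σ (star b) ∘L σ b :=
    congrArg (· ∘L σ b) (h (star b))
  have h₃ : σ (star b) ∘L adjoint W ∘L ρ b ∘L W = σ (star b) ∘L σ b :=
    congrArg (σ (star b) ∘L ·) (h b)
  have h₄ : σ (star b) ∘L adjoint W ∘L W ∘L σ b = σ (star b) ∘L σ b := by
    rw [← comp_assoc (adjoint W), hW]; rfl
  simp only [map_sub, adjoint_comp, adjoint_starAlgHom, sub_comp, comp_sub, comp_assoc]
  rw [h₁, h₂, h₃, h₄]
  abel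

lemma adjoint_comp_eq_comp_adjoint_of_compression_eq (hW : adjoint W ∘L W = 1)
    (h : ∀ b, adjoint W ∘L ρ b ∘L W = σ b) (b : B) :
    adjoint W ∘L ρ b = σ b ∘L adjoint W := by
  simpa only [adjoint_comp, adjoint_starAlgHom, star_star] using
    congrArg adjoint (comp_eq_comp_of_compression_eq hW h (star b))

end Compression

lemma commute_mul_star_of_mul_eq_mul {R : Type*} [Monoid R] [StarMul R] {t x y : R}
    (h₁ : t * x = y * t) (h₂ : x * star t = star t * y) : Commute (t * star t) y :=
  calc t * star t * y = t * (x * star t) := by rw [mul_assoc, h₂]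
    _ = y * (t * star t) := by rw [← mul_assoc, h₁, mul_assoc]

theorem block_covariance
    {A : Type*} [CStarAlgebra A]
    {H : Type*} [NormedAddCommGroup H] [InnerProductSpace ℂ H] [CompleteSpace H]
    {K : Type*} [NormedAddCommGroup K] [InnerProductSpace ℂ K] [CompleteSpace K]
    (α : A →⋆ₐ[ℂ] A)
    (π : A →⋆ₐ[ℂ] (H →L[ℂ] H))
    (T : H →L[ℂ] H)
    (hcov : ∀ a : A, T ∘L π (α a) = π a ∘L T)
    (ρ : A →⋆ₐ[ℂ] (K →L[ℂ] K))
    (W : H →L[ℂ] K) (hW : adjoint W ∘L W = 1)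
    (hext : ∀ a : A, adjoint W ∘L ρ (α a) ∘L W = π a)
    -- `Δ*`, the defect operator of `T*`:
    (Δstar : H →L[ℂ] H) (hΔ : Δstar = CFC.sqrt (1 - T * star T))
    (𝒟 : Submodule ℂ K)
    -- `π̂ a` is the restriction of `ρ a` to `𝒟*`:
    (πhat : A → (𝒟 →L[ℂ] 𝒟))
    (hπhat : ∀ a : A, 𝒟.subtypeL ∘L πhat a = ρ a ∘L 𝒟.subtypeL) :
    ∀ a : A,
      blockOp T (Δstar ∘L adjoint W ∘L 𝒟.subtypeL) 0 0 ∘L blockOp (π (α a)) 0 0 (πhat (α a)) =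
        blockOp (π a) 0 0 (πhat a) ∘L blockOp T (Δstar ∘L adjoint W ∘L 𝒟.subtypeL) 0 0 := by
  intro a
  have hWρ : adjoint W ∘L ρ (α a) = π a ∘L adjoint W :=
    adjoint_comp_eq_comp_adjoint_of_compression_eq (ρ := ρ.comp α) hW hext a
  have hcov_star : π (α a) * star T = star T * π a := by
    simpa only [← mul_def, star_mul, map_star, star_star] using congrArg star (hcov (star a))
  have hΔπ : Commute Δstar (π a) := by
    rw [hΔ, CFC.sqrt_eq_cfc]
    exact ((Commute.one_left _).sub_left
      (commute_mul_star_of_mul_eq_mul (hcov a) hcov_star)).cfc_nnreal _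
  have hD : (Δstar ∘L adjoint W ∘L 𝒟.subtypeL) ∘L πhat (α a) =
      π a ∘L Δstar ∘L adjoint W ∘L 𝒟.subtypeL :=
    calc _ = Δstar ∘L (adjoint W ∘L ρ (α a)) ∘L 𝒟.subtypeL := by
          rw [comp_assoc, comp_assoc, hπhat]; rfl
      _ = (Δstar * π a) ∘L adjoint W ∘L 𝒟.subtypeL := by rw [hWρ]; rfl
      _ = _ := by rw [hΔπ.eq]; rfl
  rw [blockOp_comp, blockOp_comp]
  simp only [comp_zero, zero_comp, add_zero, zero_add, hcov a, hD]
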